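/- arXiv:2403.06263 — 3 statements merged into one kernel-verified Lean document; each statement's English description precedes it below -/
import Mathlib

section
/- For every n ≥ 1, the polynomial x^2 + x - 1 divides x^(2(2n+1)) + N·x^(2n+1) - 1 in ℤ[x], where N = (2n+1) + Σ_{r=1}^{n} [ C(n+r, 2r+1) + C(n+r+1, 2r+1) ]. -/
open Polynomial Finset

/-!
Modulo `X ^ 2 + X - 1` the elements `y = -X` and `1 - y = X + 1` are the two roots of
`t ^ 2 = t + 1`, with product `-1`, so `y ^ m + (1 - y) ^ m` is the Lucas number
`L = fib (m - 1) + fib (m + 1)`. For odd `m` this reads `(X + 1) ^ m - X ^ m = L`, and then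
`X ^ (2 m) + L X ^ m - 1 ≡ X ^ m (X ^ m + L - (X + 1) ^ m) ≡ 0` because `X (X + 1) ≡ 1`.
For `m = 2 n + 1`, Pascal's rule shows that `∑ r, C(n + r, 2 r + 1) = fib (2 n)` (jointly with
`∑ r, C(n + r, 2 r) = fib (2 n + 1)`), which identifies `N` with `fib (2 n) + fib (2 n + 2) = L`.
-/

section GoldenRoot

variable {R : Type*} [CommRing R] {y : R}

theorem pow_succ_eq_fib_of_sq_eq_add_one (hy : y ^ 2 = y + 1) (n : ℕ) :
    y ^ (n + 1) = Nat.fib (n + 1) * y + Nat.fib n := by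
  induction n with
  | zero => simp
  | succ n ih =>
    rw [Nat.fib_add_two, pow_succ, ih]
    push_cast
    linear_combination (Nat.fib (n + 1) : R) * hy

theorem pow_succ_add_one_sub_pow_succ_of_sq_eq_add_one (hy : y ^ 2 = y + 1) (n : ℕ) :
    y ^ (n + 1) + (1 - y) ^ (n + 1) = Nat.fib n + Nat.fib (n + 2) := by
  have hy' : (1 - y) ^ 2 = (1 - y) + 1 := by linear_combination hy
  rw [pow_succ_eq_fib_of_sq_eq_add_one hy, pow_succ_eq_fib_of_sq_eq_add_one hy', Nat.fib_add_two]
  push_cast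
  ring

end GoldenRoot

theorem pow_two_mul_add_fib_mul_pow_sub_one_eq_zero {R : Type*} [CommRing R] {x : R}
    (hx : x ^ 2 + x - 1 = 0) (n : ℕ) :
    x ^ (2 * (2 * n + 1)) + (Nat.fib (2 * n) + Nat.fib (2 * n + 2) : ℕ) * x ^ (2 * n + 1) - 1
      = 0 := by
  have hlucas := pow_succ_add_one_sub_pow_succ_of_sq_eq_add_one (y := -x)
    (by linear_combination hx) (2 * n)
  rw [Odd.neg_pow (odd_two_mul_add_one n), sub_neg_eq_add] at hlucas
  have hunit : x ^ (2 * n + 1) * (1 + x) ^ (2 * n + 1) = 1 := by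
    rw [← mul_pow, show x * (1 + x) = 1 by linear_combination hx, one_pow]
  push_cast
  linear_combination -x ^ (2 * n + 1) * hlucas + hunit

theorem sum_range_choose_eq_fib (n : ℕ) :
    (∀ K, n ≤ K → ∑ r ∈ range K, (n + r).choose (2 * r + 1) = Nat.fib (2 * n)) ∧
      ∀ K, n < K → ∑ r ∈ range K, (n + r).choose (2 * r) = Nat.fib (2 * n + 1) := by
  induction n with
  | zero =>
    refine ⟨fun K _ => sum_eq_zero fun r _ => Nat.choose_eq_zero_of_lt (by omega), fun K hK => ?_⟩
    obtain _ | K := K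
    · omega
    rw [sum_range_succ', sum_eq_zero fun r _ => Nat.choose_eq_zero_of_lt (by omega)]
    rfl
  | succ n ih =>
    obtain ⟨hodd, heven⟩ := ih
    have hodd_succ (K : ℕ) (hK : n + 1 ≤ K) :
        ∑ r ∈ range K, (n + 1 + r).choose (2 * r + 1) = Nat.fib (2 * (n + 1)) := by
      simp_rw [add_right_comm n 1, Nat.choose_succ_succ', sum_add_distrib]
      rw [heven K hK, hodd K (by omega), mul_add_one, Nat.fib_add_two, add_comm]
    refine ⟨hodd_succ, fun K hK => ?_⟩
    obtain _ | K := K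
    · omega
    have hpascal (r : ℕ) : (n + 1 + (r + 1)).choose (2 * (r + 1))
        = (n + 1 + r).choose (2 * r + 1) + (n + (r + 1)).choose (2 * (r + 1)) := by
      rw [← add_assoc, mul_add_one, Nat.choose_succ_succ']
      ring_nf
    have heven' := heven (K + 1) (by omega)
    rw [sum_range_succ'] at heven' ⊢
    simp only [mul_zero, add_zero, Nat.choose_zero_right] at heven' ⊢
    rw [sum_congr rfl fun r _ => hpascal r, sum_add_distrib, hodd_succ K (by omega), add_assoc, heven',
      show 2 * (n + 1) + 1 = 2 * n + 1 + 2 by ring, Nat.fib_add_two, add_comm]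
    rfl

theorem sum_range_succ_eq_add_sum_Icc_one {M : Type*} [AddCommMonoid M] (f : ℕ → M) (n : ℕ) :
    ∑ r ∈ range (n + 1), f r = f 0 + ∑ r ∈ Icc 1 n, f r := by
  rw [range_eq_Ico, sum_eq_sum_Ico_succ_bot (by omega), zero_add, Ico_add_one_right_eq_Icc]

theorem stmt_1_general (n : ℕ)
    (N : ℕ)
    (hN : N = (2*n+1) + ∑ r ∈ Finset.Icc 1 n, ((n+r).choose (2*r+1) + (n+r+1).choose (2*r+1))) :
    (X^2 + X - 1 : ℤ[X]) ∣ X^(2*(2*n+1)) + (N : ℤ[X]) * X^(2*n+1) - 1 := by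
  have hN_fib : N = Nat.fib (2 * n) + Nat.fib (2 * n + 2) := by
    have hsum := sum_range_succ_eq_add_sum_Icc_one
      (fun r => (n + r).choose (2 * r + 1) + (n + r + 1).choose (2 * r + 1)) n
    rw [sum_add_distrib, (sum_range_choose_eq_fib n).1 _ n.le_succ] at hsum
    simp_rw [add_right_comm n _ 1] at hsum hN
    rw [(sum_range_choose_eq_fib (n + 1)).1 _ le_rfl] at hsum
    simp only [mul_zero, zero_add, add_zero, Nat.choose_one_right, mul_add_one] at hsum
    omega
  rw [← AdjoinRoot.mk_eq_zero]
  have hroot := AdjoinRoot.mk_self (f := (X ^ 2 + X - 1 : ℤ[X]))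
  rw [map_sub, map_add, map_pow, map_one, AdjoinRoot.mk_X] at hroot
  simp only [map_sub, map_add, map_mul, map_pow, map_natCast, map_one, AdjoinRoot.mk_X, hN_fib]
  exact pow_two_mul_add_fib_mul_pow_sub_one_eq_zero hroot n

theorem stmt_1 (n : ℕ) (hn : 1 ≤ n)
    (N : ℕ)
    (hN : N = (2*n+1) + ∑ r ∈ Finset.Icc 1 n, ((n+r).choose (2*r+1) + (n+r+1).choose (2*r+1))) :
    (X^2 + X - 1 : ℤ[X]) ∣ X^(2*(2*n+1)) + (N : ℤ[X]) * X^(2*n+1) - 1 :=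
  stmt_1_general n N hN
end

section
/- Let F_n(a,b) be the bivariate Fibonacci polynomials (F_0 = 0, F_1 = 1, F_{n+2} = a·F_{n+1} - b·F_n) and L_n(a,b) the Lucas polynomials (L_0 = 2, L_1 = a, same recursion). Then for every m ≥ 0, in ℤ[a,b][x]: x^(2m+2) - L_{m+1}(a,b)·x^(m+1) + b^(m+1) = (x^2 - a·x + b) · [ Σ_{j=0}^{m-1} F_{j+1}(a,b)·x^(2m-j) + Σ_{j=0}^{m} b^(m-j)·F_{j+1}(a,b)·x^j ]. -/
/-! With `Q = X² - a X + b`, both sums telescope against the Fibonacci recursion: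
`Q · ∑_{j<m} F_{j+1} X^{2m-j} = X^{2m+2} - F_{m+1} X^{m+2} + b F_m X^{m+1}` and
`Q · ∑_{j≤m} b^{m-j} F_{j+1} X^j = F_{m+1} X^{m+2} - F_{m+2} X^{m+1} + b^{m+1}`.
Adding them leaves `X^{2m+2} - (F_{m+2} - b F_m) X^{m+1} + b^{m+1}`, and `L_{m+1} = F_{m+2} - b F_m`. -/

open Polynomial MvPolynomial Finset

noncomputable def a : MvPolynomial (Fin 2) ℤ := MvPolynomial.X 0
noncomputable def b : MvPolynomial (Fin 2) ℤ := MvPolynomial.X 1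

noncomputable def F : ℕ → MvPolynomial (Fin 2) ℤ
  | 0 => 0
  | 1 => 1
  | (n+2) => a * F (n+1) - b * F n

noncomputable def L : ℕ → MvPolynomial (Fin 2) ℤ
  | 0 => 2
  | 1 => a
  | (n+2) => a * L (n+1) - b * L n

lemma F_add_two (n : ℕ) : F (n + 2) = a * F (n + 1) - b * F n := rfl

lemma L_add_two (n : ℕ) : L (n + 2) = a * L (n + 1) - b * L n := rfl

lemma C_F_add_two (n : ℕ) :
    (Polynomial.C (F (n + 2)) : (MvPolynomial (Fin 2) ℤ)[X])
      = Polynomial.C a * Polynomial.C (F (n + 1)) - Polynomial.C b * Polynomial.C (F n) := by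
  rw [F_add_two, map_sub, map_mul, map_mul]

lemma L_add_one_eq_F : ∀ n : ℕ, L (n + 1) = F (n + 2) - b * F n
  | 0 => by simp [L, F]
  | 1 => by simp [L, F]; ring
  | n + 2 => by
    rw [L_add_two, L_add_one_eq_F n, L_add_one_eq_F (n + 1)]
    simp only [F_add_two]
    ring

lemma mul_sum_F_mul_X_pow (m : ℕ) :
    ((Polynomial.X ^ 2 - Polynomial.C a * Polynomial.X + Polynomial.C b)
        * ∑ j ∈ range m, Polynomial.C (F (j + 1)) * Polynomial.X ^ (2 * m - j)
      : (MvPolynomial (Fin 2) ℤ)[X])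
      = Polynomial.X ^ (2 * m + 2) - Polynomial.C (F (m + 1)) * Polynomial.X ^ (m + 2)
        + Polynomial.C (b * F m) * Polynomial.X ^ (m + 1) := by
  induction m with
  | zero => simp [F]
  | succ m ih =>
    have hsum : (∑ j ∈ range (m + 1), Polynomial.C (F (j + 1)) * Polynomial.X ^ (2 * (m + 1) - j)
          : (MvPolynomial (Fin 2) ℤ)[X])
        = Polynomial.X ^ 2 * ∑ j ∈ range m, Polynomial.C (F (j + 1)) * Polynomial.X ^ (2 * m - j)
          + Polynomial.C (F (m + 1)) * Polynomial.X ^ (m + 2) := by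
      rw [sum_range_succ, mul_sum, show 2 * (m + 1) - m = m + 2 by omega]
      refine congrArg (· + _) (sum_congr rfl fun j hj => ?_)
      rw [show 2 * (m + 1) - j = 2 * m - j + 2 by grind, pow_add]
      ring
    rw [hsum, mul_add, mul_left_comm, ih, C_F_add_two m, map_mul, map_mul]
    ring

lemma mul_sum_pow_mul_F_mul_X_pow (m : ℕ) :
    ((Polynomial.X ^ 2 - Polynomial.C a * Polynomial.X + Polynomial.C b)
        * ∑ j ∈ range (m + 1), Polynomial.C (b ^ (m - j) * F (j + 1)) * Polynomial.X ^ j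
      : (MvPolynomial (Fin 2) ℤ)[X])
      = Polynomial.C (F (m + 1)) * Polynomial.X ^ (m + 2) + Polynomial.C (b ^ (m + 1))
        - Polynomial.C (F (m + 2)) * Polynomial.X ^ (m + 1) := by
  induction m with
  | zero => simp [F]; ring
  | succ m ih =>
    have hsum : (∑ j ∈ range (m + 2), Polynomial.C (b ^ (m + 1 - j) * F (j + 1)) * Polynomial.X ^ j
          : (MvPolynomial (Fin 2) ℤ)[X])
        = Polynomial.C b
            * ∑ j ∈ range (m + 1), Polynomial.C (b ^ (m - j) * F (j + 1)) * Polynomial.X ^ j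
          + Polynomial.C (F (m + 2)) * Polynomial.X ^ (m + 1) := by
      rw [sum_range_succ, mul_sum, Nat.sub_self, pow_zero, one_mul]
      refine congrArg (· + _) (sum_congr rfl fun j hj => ?_)
      rw [show m + 1 - j = m - j + 1 by grind, pow_succ, map_mul, map_mul, map_mul]
      ring
    rw [hsum, mul_add, mul_left_comm, ih, C_F_add_two (m + 1), map_pow, map_pow]
    ring

theorem stmt_8 (m : ℕ) :
    (Polynomial.X^(2*m+2) - Polynomial.C (L (m+1)) * Polynomial.X^(m+1)
        + Polynomial.C (b^(m+1)) : Polynomial (MvPolynomial (Fin 2) ℤ))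
      = (Polynomial.X^2 - Polynomial.C a * Polynomial.X + Polynomial.C b)
        * (∑ j ∈ Finset.range m, Polynomial.C (F (j+1)) * Polynomial.X^(2*m-j)
          + ∑ j ∈ Finset.range (m+1), Polynomial.C (b^(m-j) * F (j+1)) * Polynomial.X^j) := by
  rw [mul_add, mul_sum_F_mul_X_pow, mul_sum_pow_mul_F_mul_X_pow, L_add_one_eq_F]
  simp only [map_sub, map_mul]
  ring
end

section
/- For every m ≥ 0 and Fibonacci numbers F_k, in ℤ[x]: x^(2m+2) + (-1)^m·(F_m + F_{m+2})·x^(m+1) + (-1)^(m+1) = (x^2 + x - 1) · [ Σ_{j=0}^{m-1} (-1)^j·F_{j+1}·x^(2m-j) + (-1)^m · Σ_{j=0}^{m} F_{j+1}·x^j ]. -/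
open Polynomial Finset

/-!
Both sums telescope against `x ^ 2 + x - 1` because of the recurrence `F (k + 2) = F (k + 1) + F k`:
multiplying the ascending sum leaves only the top two terms and `-1`, multiplying the alternating
descending sum leaves only `x ^ (2m + 2)` and two terms of degree `m + 2` and `m + 1`. Adding the two
products with the sign `(-1) ^ m`, the degree `m + 2` terms cancel and the degree `m + 1` terms combine
to `(-1) ^ m (F m + F (m + 2))`.
-/

section FibonacciTelescoping

variable {R : Type*} [CommRing R] (x : R)

theorem mul_sum_fib_mul_pow (m : ℕ) :
    (x ^ 2 + x - 1) * ∑ j ∈ range (m + 1), (Nat.fib (j + 1) : R) * x ^ j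
      = Nat.fib (m + 1) * x ^ (m + 2) + Nat.fib (m + 2) * x ^ (m + 1) - 1 := by
  induction m with
  | zero => simp
  | succ n ih =>
    rw [sum_range_succ, mul_add, ih, Nat.fib_add_two (n := n + 1)]
    push_cast
    ring

theorem mul_sum_neg_one_pow_mul_fib_mul_pow (m : ℕ) :
    (x ^ 2 + x - 1) * ∑ j ∈ range m, (-1) ^ j * (Nat.fib (j + 1) : R) * x ^ (2 * m - j)
      = x ^ (2 * m + 2) - (-1) ^ m * Nat.fib (m + 1) * x ^ (m + 2)
        + (-1) ^ m * Nat.fib m * x ^ (m + 1) := by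
  induction m with
  | zero => simp
  | succ n ih =>
    have shift : ∑ j ∈ range (n + 1), (-1) ^ j * (Nat.fib (j + 1) : R) * x ^ (2 * (n + 1) - j)
        = x ^ 2 * ∑ j ∈ range n, (-1) ^ j * (Nat.fib (j + 1) : R) * x ^ (2 * n - j)
          + (-1) ^ n * Nat.fib (n + 1) * x ^ (n + 2) := by
      rw [sum_range_succ, mul_sum, show 2 * (n + 1) - n = n + 2 by omega]
      congr 1
      refine sum_congr rfl fun j hj => ?_
      rw [show 2 * (n + 1) - j = 2 * n - j + 2 by have := mem_range.mp hj; omega, pow_add]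
      ring
    rw [shift, mul_add, mul_left_comm, ih, Nat.fib_add_two (n := n)]
    push_cast
    ring

end FibonacciTelescoping

theorem stmt_13 (m : ℕ) :
    (X^(2*m+2) + C ((-1)^m * ((Nat.fib m : ℤ) + Nat.fib (m+2))) * X^(m+1)
        + C ((-1)^(m+1)) : ℤ[X])
      = (X^2 + X - 1)
        * (∑ j ∈ Finset.range m, C ((-1)^j * (Nat.fib (j+1) : ℤ)) * X^(2*m-j)
          + C ((-1)^m) * ∑ j ∈ Finset.range (m+1), C ((Nat.fib (j+1) : ℤ)) * X^j) := by
  simp only [map_mul, map_add, map_pow, map_neg, map_one, map_natCast]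
  rw [mul_add (X ^ 2 + X - 1 : ℤ[X]), mul_sum_neg_one_pow_mul_fib_mul_pow, mul_left_comm, mul_sum_fib_mul_pow,
    Nat.fib_add_two (n := m)]
  push_cast
  ring
end
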